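/- For every real β > 2, the sum Σ det(m)^(−β) over a set of representatives m of the orbits of the left multiplication action of SL₂(ℤ) on {m ∈ M₂(ℤ) : det(m) > 0} is summable with value ζ(β) · ζ(β−1), where ζ is the Riemann zeta function. -/

import Mathlib

open Matrix

noncomputable section

/-- The Riemann zeta function of a real argument `β > 1`, `ζ(β) = Σ_{n≥1} n^{-β}`. -/
def zetaR (β : ℝ) : ℝ := ∑' n : ℕ, ((n : ℝ) + 1) ^ (-β)

/- ## Auxiliary lemmas -/

/-- Hermite normal form existence for `2×2` integer matrices with positive determinant. -/
lemma hnf_exists (m : Matrix (Fin 2) (Fin 2) ℤ) (hm : 0 < m.det) :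
    ∃ (a d b : ℤ) (γ : Matrix.SpecialLinearGroup (Fin 2) ℤ),
      0 < a ∧ 0 < d ∧ 0 ≤ b ∧ b < d ∧ (γ : Matrix (Fin 2) (Fin 2) ℤ) * m = !![a, b; 0, d] := by
  set p := m 0 0 with hp
  set q := m 0 1 with hq
  set r := m 1 0 with hr
  set s := m 1 1 with hs
  have hdet : m.det = p * s - q * r := Matrix.det_fin_two m
  have hmeta : m = !![p, q; r, s] := by rw [hp, hq, hr, hs]; exact Matrix.etaExpand_eq m ▸ rfl
  have hg0 : (Int.gcd p r : ℤ) ≠ 0 := by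
    intro h
    have := Int.gcd_eq_zero_iff.mp (by exact_mod_cast h)
    rw [this.1, this.2] at hdet
    simp at hdet; omega
  set G : ℤ := (Int.gcd p r : ℤ) with hG
  have hGpos : 0 < G := lt_of_le_of_ne (Int.natCast_nonneg _) (Ne.symm hg0)
  obtain ⟨p', hp'⟩ : G ∣ p := Int.gcd_dvd_left p r
  obtain ⟨r', hr'⟩ : G ∣ r := Int.gcd_dvd_right p r
  set u := Int.gcdA p r with hu
  set v := Int.gcdB p r with hv
  have hbez : G = p * u + r * v := Int.gcd_eq_gcd_ab p r
  have hbez' : G * (p' * u + r' * v) = G * 1 := by rw [hp', hr'] at hbez; ring_nf; linarith [hbez]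
  have hone : p' * u + r' * v = 1 := mul_left_cancel₀ hg0 hbez'
  have hdet1 : (!![u, v; -r', p'] : Matrix (Fin 2) (Fin 2) ℤ).det = 1 := by
    rw [Matrix.det_fin_two_of]; linarith [hone]
  set q1 := u * q + v * s with hq1
  set s1 := -r' * q + p' * s with hs1
  have e1 : u * p + v * r = G := by linarith [hbez]
  have e2 : -r' * p + p' * r = 0 := by rw [hp', hr']; ring
  have hmul1 : !![u, v; -r', p'] * m = !![G, q1; 0, s1] := by
    rw [hmeta, Matrix.mul_fin_two, e1, e2]
  have hs1pos : 0 < s1 := by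
    have : (!![u, v; -r', p'] * m).det = m.det := by
      rw [Matrix.det_mul, hdet1, one_mul]
    rw [hmul1, Matrix.det_fin_two_of] at this
    nlinarith [hm, hGpos]
  set k := -(q1 / s1) with hk
  set b := q1 % s1 with hb
  have hdet2 : (!![1, k; 0, 1] : Matrix (Fin 2) (Fin 2) ℤ).det = 1 := by
    rw [Matrix.det_fin_two_of]; ring
  have hmul2 : !![1, k; 0, 1] * !![G, q1; 0, s1] = !![G, b; 0, s1] := by
    rw [Matrix.mul_fin_two]
    have : 1 * q1 + k * s1 = b := by rw [hk, hb, Int.emod_def]; ring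
    rw [this]
    norm_num
  refine ⟨G, s1, b, (show Matrix.SpecialLinearGroup (Fin 2) ℤ from ⟨!![1, k; 0, 1], hdet2⟩) *
      (show Matrix.SpecialLinearGroup (Fin 2) ℤ from ⟨!![u, v; -r', p'], hdet1⟩), hGpos, hs1pos,
    Int.emod_nonneg _ (ne_of_gt hs1pos), Int.emod_lt_of_pos _ hs1pos, ?_⟩
  rw [Matrix.SpecialLinearGroup.coe_mul]
  show !![1, k; 0, 1] * !![u, v; -r', p'] * m = _
  rw [mul_assoc, hmul1, hmul2]

/-- Hermite normal form uniqueness. -/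
lemma hnf_unique (a d b a' d' b' : ℤ) (γ : Matrix.SpecialLinearGroup (Fin 2) ℤ)
    (ha : 0 < a) (hd : 0 < d) (hb : 0 ≤ b) (hbd : b < d)
    (ha' : 0 < a') (hd' : 0 < d') (hb' : 0 ≤ b') (hbd' : b' < d')
    (h : (γ : Matrix (Fin 2) (Fin 2) ℤ) * !![a, b; 0, d] = !![a', b'; 0, d']) :
    a = a' ∧ d = d' ∧ b = b' := by
  set g : Matrix (Fin 2) (Fin 2) ℤ := (γ : Matrix (Fin 2) (Fin 2) ℤ) with hg
  have hdet : g 0 0 * g 1 1 - g 0 1 * g 1 0 = 1 := by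
    have := γ.prop
    rwa [Matrix.det_fin_two] at this
  have E00 : g 0 0 * a = a' := by
    have := congr_fun (congr_fun h 0) 0
    simpa [Matrix.mul_apply, Fin.sum_univ_two] using this
  have E01 : g 0 0 * b + g 0 1 * d = b' := by
    have := congr_fun (congr_fun h 0) 1
    simpa [Matrix.mul_apply, Fin.sum_univ_two] using this
  have E10 : g 1 0 * a = 0 := by
    have := congr_fun (congr_fun h 1) 0
    simpa [Matrix.mul_apply, Fin.sum_univ_two] using this
  have E11 : g 1 0 * b + g 1 1 * d = d' := by
    have := congr_fun (congr_fun h 1) 1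
    simpa [Matrix.mul_apply, Fin.sum_univ_two] using this
  have h10 : g 1 0 = 0 := by
    rcases mul_eq_zero.mp E10 with h' | h'
    · exact h'
    · omega
  rw [h10] at hdet E11
  have h0011 : g 0 0 * g 1 1 = 1 := by linarith
  have h00 : g 0 0 = 1 := by
    rcases Int.eq_one_or_neg_one_of_mul_eq_one h0011 with h' | h'
    · exact h'
    · nlinarith [E00]
  rw [h00] at E00 E01 h0011
  have h11 : g 1 1 = 1 := by linarith
  rw [h11] at E11
  have hdd : d = d' := by linarith
  have h01 : g 0 1 = 0 := by
    rcases lt_trichotomy (g 0 1) 0 with h' | h' | h'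
    · nlinarith [E01]
    · exact h'
    · nlinarith [E01]
  refine ⟨by linarith, hdd, by nlinarith [E01]⟩

/-- The Hermite normal form matrix indexed by `(a, d, b)` with `0 ≤ b ≤ d`. -/
def Mh (x : Σ p : ℕ × ℕ, Fin (p.2 + 1)) : Matrix (Fin 2) (Fin 2) ℤ :=
  !![(x.1.1 : ℤ) + 1, (x.2 : ℤ); 0, (x.1.2 : ℤ) + 1]

lemma Mh_det (x : Σ p : ℕ × ℕ, Fin (p.2 + 1)) :
    (Mh x).det = ((x.1.1 : ℤ) + 1) * ((x.1.2 : ℤ) + 1) := by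
  rw [Mh, Matrix.det_fin_two_of]; ring

lemma Mh_det_pos (x : Σ p : ℕ × ℕ, Fin (p.2 + 1)) : 0 < (Mh x).det := by
  rw [Mh_det]; positivity

lemma Mh_bounds (x : Σ p : ℕ × ℕ, Fin (p.2 + 1)) :
    0 < (x.1.1 : ℤ) + 1 ∧ 0 < (x.1.2 : ℤ) + 1 ∧ 0 ≤ (x.2 : ℤ) ∧ (x.2 : ℤ) < (x.1.2 : ℤ) + 1 := by
  refine ⟨by positivity, by positivity, Int.natCast_nonneg _, ?_⟩
  have := x.2.isLt
  omega

lemma Mh_inj {x y : Σ p : ℕ × ℕ, Fin (p.2 + 1)} (γ : Matrix.SpecialLinearGroup (Fin 2) ℤ)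
    (h : (γ : Matrix (Fin 2) (Fin 2) ℤ) * Mh x = Mh y) : x = y := by
  obtain ⟨hx1, hx2, hx3, hx4⟩ := Mh_bounds x
  obtain ⟨hy1, hy2, hy3, hy4⟩ := Mh_bounds y
  obtain ⟨e1, e2, e3⟩ := hnf_unique _ _ _ _ _ _ γ hx1 hx2 hx3 hx4 hy1 hy2 hy3 hy4 h
  obtain ⟨⟨xa, xd⟩, xb⟩ := x
  obtain ⟨⟨ya, yd⟩, yb⟩ := y
  simp only at e1 e2 e3
  have ha : xa = ya := by exact_mod_cast by omega
  have hd : xd = yd := by exact_mod_cast by omega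
  subst ha; subst hd
  have hb : xb = yb := by
    apply Fin.ext
    exact_mod_cast e3
  rw [hb]

/-- Summability of the shifted zeta series. -/
lemma g_summable (β : ℝ) (hβ : 1 < β) : Summable (fun n : ℕ => ((n : ℝ) + 1) ^ (-β)) := by
  have h := Real.summable_nat_rpow.mpr (show -β < -1 by linarith)
  have := (summable_nat_add_iff 1).mpr h
  simpa using this

/-- The summation over the Hermite normal form index set. -/
lemma sum_comp (β : ℝ) (hβ : 2 < β) :
    Summable (fun x : Σ p : ℕ × ℕ, Fin (p.2 + 1) =>
      (((x.1.1 : ℝ) + 1) * ((x.1.2 : ℝ) + 1)) ^ (-β)) ∧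
    ∑' x : Σ p : ℕ × ℕ, Fin (p.2 + 1), (((x.1.1 : ℝ) + 1) * ((x.1.2 : ℝ) + 1)) ^ (-β)
      = zetaR β * zetaR (β - 1) := by
  set fI : (Σ p : ℕ × ℕ, Fin (p.2 + 1)) → ℝ :=
    fun x => (((x.1.1 : ℝ) + 1) * ((x.1.2 : ℝ) + 1)) ^ (-β) with hfI
  have hnn : ∀ x, 0 ≤ fI x := fun x => Real.rpow_nonneg (by positivity) _
  have hg : Summable (fun n : ℕ => ((n : ℝ) + 1) ^ (-β)) := g_summable β (by linarith)
  have hh : Summable (fun n : ℕ => ((n : ℝ) + 1) ^ (-(β - 1))) := g_summable _ (by linarith)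
  have hT : ∀ p : ℕ × ℕ, ∑' b : Fin (p.2 + 1), fI ⟨p, b⟩
      = ((p.1 : ℝ) + 1) ^ (-β) * ((p.2 : ℝ) + 1) ^ (-(β - 1)) := by
    intro p
    rw [tsum_fintype]
    simp only [hfI]
    rw [Finset.sum_const, Finset.card_univ, Fintype.card_fin, nsmul_eq_mul]
    rw [Real.mul_rpow (by positivity) (by positivity)]
    have hpow : ((p.2 : ℝ) + 1) ^ (-(β - 1)) = ((p.2 : ℝ) + 1) * ((p.2 : ℝ) + 1) ^ (-β) := by
      have hpos : (0:ℝ) < (p.2 : ℝ) + 1 := by positivity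
      rw [show -(β - 1) = 1 + -β by ring, Real.rpow_add hpos, Real.rpow_one]
    rw [hpow]
    push_cast
    ring
  have hTsummable : Summable (fun p : ℕ × ℕ =>
      ((p.1 : ℝ) + 1) ^ (-β) * ((p.2 : ℝ) + 1) ^ (-(β - 1))) :=
    hg.mul_of_nonneg hh (fun n => Real.rpow_nonneg (by positivity) _)
      (fun n => Real.rpow_nonneg (by positivity) _)
  have hSummable : Summable fI := by
    rw [summable_sigma_of_nonneg hnn]
    exact ⟨fun p => Summable.of_finite, hTsummable.congr (fun p => (hT p).symm)⟩
  refine ⟨hSummable, ?_⟩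
  rw [hSummable.tsum_sigma]
  have hgn : Summable (fun n : ℕ => ‖((n:ℝ)+1)^(-β)‖) := by
    refine hg.congr fun n => ?_
    rw [Real.norm_eq_abs, abs_of_nonneg (Real.rpow_nonneg (by positivity) _)]
  have hhn : Summable (fun n : ℕ => ‖((n:ℝ)+1)^(-(β-1))‖) := by
    refine hh.congr fun n => ?_
    rw [Real.norm_eq_abs, abs_of_nonneg (Real.rpow_nonneg (by positivity) _)]
  have key := tsum_mul_tsum_of_summable_norm hgn hhn
  calc ∑' (p : ℕ × ℕ), ∑' (b : Fin (p.2 + 1)), fI ⟨p, b⟩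
      = ∑' (p : ℕ × ℕ), ((p.1 : ℝ) + 1) ^ (-β) * ((p.2 : ℝ) + 1) ^ (-(β - 1)) :=
        tsum_congr hT
    _ = zetaR β * zetaR (β - 1) := by rw [zetaR, zetaR, key]

/-- for `β > 2`, the sum `Σ det(m)^{-β}` over representatives of
the `SL₂(ℤ)`-orbits of integer matrices with positive determinant is summable
with value `ζ(β)·ζ(β−1)`. -/
theorem zeta_M2Z (β : ℝ) (hβ : 2 < β)
    (R : Set (Matrix (Fin 2) (Fin 2) ℤ))
    (hRS : R ⊆ {m : Matrix (Fin 2) (Fin 2) ℤ | 0 < m.det})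
    (hrep : ∀ m : Matrix (Fin 2) (Fin 2) ℤ, 0 < m.det → ∃! r, r ∈ R ∧
      ∃ γ : Matrix.SpecialLinearGroup (Fin 2) ℤ, (γ : Matrix (Fin 2) (Fin 2) ℤ) * m = r) :
    (Summable fun r : R => ((r : Matrix (Fin 2) (Fin 2) ℤ).det : ℝ) ^ (-β)) ∧
    ∑' r : R, ((r : Matrix (Fin 2) (Fin 2) ℤ).det : ℝ) ^ (-β) = zetaR β * zetaR (β - 1) := by
  classical
  have hx : ∀ x : Σ p : ℕ × ℕ, Fin (p.2 + 1),
      ∃ r, (r ∈ R ∧ ∃ γ : Matrix.SpecialLinearGroup (Fin 2) ℤ,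
        (γ : Matrix (Fin 2) (Fin 2) ℤ) * Mh x = r) := fun x => (hrep (Mh x) (Mh_det_pos x)).exists
  choose rep hrepR hrepγ using hx
  let φ : (Σ p : ℕ × ℕ, Fin (p.2 + 1)) → R := fun x => ⟨rep x, hrepR x⟩
  have hφdet : ∀ x, ((φ x : Matrix (Fin 2) (Fin 2) ℤ)).det = (Mh x).det := by
    intro x
    obtain ⟨γ, hγ⟩ := hrepγ x
    show (rep x).det = _
    rw [← hγ, Matrix.det_mul, γ.prop, one_mul]
  have hinj : Function.Injective φ := by
    intro x y hxy
    obtain ⟨γx, hγx⟩ := hrepγ x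
    obtain ⟨γy, hγy⟩ := hrepγ y
    have hxy'' : rep x = rep y := congrArg Subtype.val hxy
    have hxy' : (γx : Matrix (Fin 2) (Fin 2) ℤ) * Mh x
        = (γy : Matrix (Fin 2) (Fin 2) ℤ) * Mh y := by
      rw [hγx, hγy, hxy'']
    refine Mh_inj (γy⁻¹ * γx) ?_
    rw [Matrix.SpecialLinearGroup.coe_mul, mul_assoc, hxy', ← mul_assoc,
      ← Matrix.SpecialLinearGroup.coe_mul, inv_mul_cancel]
    simp
  have hsurj : Function.Surjective φ := by
    intro r0
    have hr0det : 0 < (r0 : Matrix (Fin 2) (Fin 2) ℤ).det := hRS r0.prop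
    obtain ⟨a, d, b, γ, ha, hd, hb, hbd, hγ⟩ := hnf_exists _ hr0det
    refine ⟨⟨(a.toNat - 1, d.toNat - 1), ⟨b.toNat, by show b.toNat < d.toNat - 1 + 1; omega⟩⟩, ?_⟩
    set x : Σ p : ℕ × ℕ, Fin (p.2 + 1) :=
      ⟨(a.toNat - 1, d.toNat - 1), ⟨b.toNat, by show b.toNat < d.toNat - 1 + 1; omega⟩⟩ with hxdef
    have hMx : Mh x = !![a, b; 0, d] := by
      have ea : (x.1.1 : ℤ) + 1 = a := by show ((a.toNat - 1 : ℕ) : ℤ) + 1 = a; omega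
      have ed : (x.1.2 : ℤ) + 1 = d := by show ((d.toNat - 1 : ℕ) : ℤ) + 1 = d; omega
      have eb : ((x.2 : ℕ) : ℤ) = b := by show ((b.toNat : ℕ) : ℤ) = b; omega
      rw [Mh, ea, ed, eb]
    have hr0sat : (r0 : Matrix (Fin 2) (Fin 2) ℤ) ∈ R ∧
        ∃ δ : Matrix.SpecialLinearGroup (Fin 2) ℤ,
          (δ : Matrix (Fin 2) (Fin 2) ℤ) * Mh x = r0 := by
      refine ⟨r0.prop, γ⁻¹, ?_⟩
      rw [hMx, ← hγ, ← mul_assoc, ← Matrix.SpecialLinearGroup.coe_mul, inv_mul_cancel]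
      simp
    have hφsat : (rep x) ∈ R ∧
        ∃ δ : Matrix.SpecialLinearGroup (Fin 2) ℤ,
          (δ : Matrix (Fin 2) (Fin 2) ℤ) * Mh x = rep x :=
      ⟨hrepR x, hrepγ x⟩
    have := (hrep (Mh x) (Mh_det_pos x)).unique hφsat hr0sat
    exact Subtype.ext this
  let e : (Σ p : ℕ × ℕ, Fin (p.2 + 1)) ≃ R := Equiv.ofBijective φ ⟨hinj, hsurj⟩
  let F : R → ℝ := fun r => ((r : Matrix (Fin 2) (Fin 2) ℤ).det : ℝ) ^ (-β)
  have hcomp : ∀ x, F (e x) = (((x.1.1 : ℝ) + 1) * ((x.1.2 : ℝ) + 1)) ^ (-β) := by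
    intro x
    have h1 : F (e x) = (((Mh x).det : ℤ) : ℝ) ^ (-β) := by
      show ((rep x).det : ℝ) ^ (-β) = _
      rw [hφdet x]
    rw [h1, Mh_det]
    push_cast
    ring_nf
  obtain ⟨hs, hv⟩ := sum_comp β hβ
  have hsF : Summable F := by
    rw [← e.summable_iff]
    exact hs.congr (fun x => (hcomp x).symm)
  refine ⟨hsF, ?_⟩
  rw [← e.tsum_eq F, tsum_congr hcomp]
  exact hv

end
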